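/- arXiv:2208.11159 — 4 statements merged into one kernel-verified Lean document; each statement's English description precedes it below -/
import Mathlib

section
/- Let h₋ > 0, U⁻ ∈ C²([−h₋, 0]; ℝ), and c ∈ ℝ \ U⁻([−h₋, 0]). For K ≥ 0 let y(K, ·) := y⁻(c, √K, ·) be the unique solution on [−h₋, 0] of −y'' + (K + (U⁻)''/(U⁻ − c)) y = 0 with y(−h₋) = 0, y'(−h₋) = 1, and define G(K) := y'(K, 0)/y(K, 0). Then G is twice differentiable on [0, ∞) and, denoting by z(x) the derivative of K ↦ y(K, x), G''(K) = −2 ∫_{−h₋}^{0} ( y(K, x)² / y(K, 0)² ) ( z(0)/y(K, 0) − z(x)/y(K, x) ) dx < 0 for every K ≥ 0; i.e., K ↦ Y⁻(c, √K) is strictly concave in K = k². -/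
open Set MeasureTheory intervalIntegral Filter Topology Real

/-!
Write `y_K` for the fundamental solution and `G(K) = y_K'(0) / y_K(0)`. The Wronskian identity
`y_{K'}' y_K - y_{K'} y_K' = (K' - K) ∫ y_K y_{K'}` turns the difference quotients of `G` into
`∫ y_K y_{K'} / (y_K(0) y_{K'}(0))`, hence `G'(K) = ∫ y_K² / y_K(0)²`; Grönwall bounds, uniform
for `K'` near `K`, justify every passage to the limit under the integral sign. Differentiating
`G'` once more gives the formula for `G''`. Its sign comes from the strict monotonicity of
`x ↦ z(x) / y_K(x)`: dividing the Wronskian identity by `y_K²` gives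
`∂ₓ (y_{K'} / y_K) = (K' - K) (∫ y_K y_{K'}) / y_K²`, whose difference quotient in `K` tends to
`(∫ y_K²) / y_K² > 0`.
-/

theorem eventually_pos_of_hasDerivAt {f : ℝ → ℝ} {f' a : ℝ} (hf : HasDerivAt f f' a)
    (ha : f a = 0) (hf' : 0 < f') : ∀ᶠ t in 𝓝[>] a, 0 < f t := by
  have hslope : Tendsto (slope f a) (𝓝[>] a) (𝓝 f') :=
    (hasDerivWithinAt_iff_tendsto_slope' self_notMem_Ioi).1 hf.hasDerivWithinAt
  filter_upwards [hslope.eventually (eventually_gt_nhds hf'), self_mem_nhdsWithin]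
    with t ht hat
  rw [slope_def_field, ha, sub_zero] at ht
  exact (div_pos_iff_of_pos_right (sub_pos.2 hat)).1 ht

theorem HasDerivWithinAt.tendsto_sub_div_sub {f : ℝ → ℝ} {f' x : ℝ} {s : Set ℝ}
    (hf : HasDerivWithinAt f f' s x) :
    Tendsto (fun t => (f t - f x) / (t - x)) (𝓝[s \ {x}] x) (𝓝 f') :=
  (hasDerivWithinAt_iff_tendsto_slope.1 hf).congr fun _ => slope_def_field _ _ _

theorem tendsto_intervalIntegral_of_abs_le {ι : Type*} {l : Filter ι} [l.IsCountablyGenerated]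
    {F : ι → ℝ → ℝ} {f : ℝ → ℝ} {a b C : ℝ} (hab : a ≤ b)
    (hF : ∀ᶠ i in l, ContinuousOn (F i) (Icc a b))
    (hC : ∀ᶠ i in l, ∀ x ∈ Icc a b, |F i x| ≤ C)
    (hlim : ∀ x ∈ Icc a b, Tendsto (fun i => F i x) l (𝓝 (f x))) :
    Tendsto (fun i => ∫ x in a..b, F i x) l (𝓝 (∫ x in a..b, f x)) := by
  rw [← uIcc_of_le hab] at hF hC hlim
  refine tendsto_integral_filter_of_dominated_convergence (fun _ => C)
    (hF.mono fun i hi => (hi.mono uIoc_subset_uIcc).aestronglyMeasurable measurableSet_uIoc)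
    (hC.mono fun i hi => .of_forall fun x hx => hi x (uIoc_subset_uIcc hx))
    intervalIntegrable_const (.of_forall fun x hx => hlim x (uIoc_subset_uIcc hx))

theorem intervalIntegrable_of_tendsto_of_abs_le {ι : Type*} {l : Filter ι}
    [l.IsCountablyGenerated] [l.NeBot] {F : ι → ℝ → ℝ} {f : ℝ → ℝ} {a b C : ℝ} (hab : a ≤ b)
    (hF : ∀ᶠ i in l, ContinuousOn (F i) (Icc a b))
    (hC : ∀ᶠ i in l, ∀ x ∈ Icc a b, |F i x| ≤ C)
    (hlim : ∀ x ∈ Icc a b, Tendsto (fun i => F i x) l (𝓝 (f x))) :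
    IntervalIntegrable f volume a b := by
  obtain ⟨v, hv⟩ := l.exists_seq_tendsto
  obtain ⟨N, hN⟩ := eventually_atTop.1 (hv.eventually (hF.and hC))
  have hw : Tendsto (fun n => v (n + N)) atTop l := hv.comp (tendsto_add_atTop_nat N)
  rw [intervalIntegrable_iff_integrableOn_Ioc_of_le hab]
  have hmeas : AEStronglyMeasurable f (volume.restrict (Ioc a b)) :=
    aestronglyMeasurable_of_tendsto_ae atTop
      (fun n => ((hN (n + N) le_add_self).1.mono Ioc_subset_Icc_self).aestronglyMeasurable
        measurableSet_Ioc)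
      ((ae_restrict_iff' measurableSet_Ioc).2 <| .of_forall fun x hx =>
        (hlim x (Ioc_subset_Icc_self hx)).comp hw)
  refine Integrable.mono' (integrable_const C) hmeas
    ((ae_restrict_iff' measurableSet_Ioc).2 <| .of_forall fun x hx => ?_)
  exact le_of_tendsto ((hlim x (Ioc_subset_Icc_self hx)).comp hw).abs
    (.of_forall fun n => (hN (n + N) le_add_self).2 x (Ioc_subset_Icc_self hx))

theorem ContinuousOn.continuousOn_primitive_Icc {f : ℝ → ℝ} {a b : ℝ}
    (hf : ContinuousOn f (Icc a b)) (hab : a ≤ b) :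
    ContinuousOn (fun t => ∫ s in a..t, f s) (Icc a b) := by
  simpa [uIcc_of_le hab] using
    continuousOn_primitive_interval' (hf.intervalIntegrable_of_Icc hab) left_mem_uIcc

theorem nhdsWithin_Ici_diff_singleton_neBot {a K : ℝ} (hK : a ≤ K) :
    (𝓝[Ici a \ {K}] K).NeBot :=
  (nhdsGT_neBot K).mono (nhdsWithin_mono _ fun _ hK' => ⟨hK.trans (le_of_lt hK'), ne_of_gt hK'⟩)

theorem integral_primitive_sq_div_sq_pos {f : ℝ → ℝ} {a b x₁ x₂ : ℝ}
    (hf : ContinuousOn f (Icc a b)) (hpos : ∀ x ∈ Ioc a b, 0 < f x) (hx₁ : a < x₁)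
    (hlt : x₁ < x₂) (hx₂ : x₂ ≤ b) : 0 < ∫ t in x₁..x₂, (∫ s in a..t, f s ^ 2) / f t ^ 2 := by
  have hab : a ≤ b := hx₁.le.trans (hlt.le.trans hx₂)
  have hsub : Icc x₁ x₂ ⊆ Icc a b := Icc_subset_Icc hx₁.le hx₂
  have hf2 : ContinuousOn (fun t => f t ^ 2) (Icc a b) := hf.pow 2
  have hne : ∀ t ∈ Icc x₁ x₂, f t ^ 2 ≠ 0 := fun t ht =>
    (pow_pos (hpos t ⟨hx₁.trans_le ht.1, ht.2.trans hx₂⟩) 2).ne'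
  refine intervalIntegral_pos_of_pos_on ?_ (fun t ht => div_pos ?_ ?_) hlt
  · exact (((hf2.continuousOn_primitive_Icc hab).mono hsub).div (hf2.mono hsub)
      hne).intervalIntegrable_of_Icc hlt.le
  · have hta := hsub (Ioo_subset_Icc_self ht)
    exact intervalIntegral_pos_of_pos_on
      ((hf2.mono (Icc_subset_Icc le_rfl hta.2)).intervalIntegrable_of_Icc hta.1)
      (fun s hs => pow_pos (hpos s ⟨hs.1, hs.2.le.trans hta.2⟩) 2) (hx₁.trans ht.1)
  · exact pow_pos (hpos t ⟨hx₁.trans ht.1, ht.2.le.trans hx₂⟩) 2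

theorem hasDerivWithinAt_intervalIntegral_of_lipschitz {F : ℝ → ℝ → ℝ} {F' : ℝ → ℝ}
    {s : Set ℝ} {K a b C : ℝ} (hab : a ≤ b) (hK : K ∈ s)
    (hF : ∀ᶠ K' in 𝓝[s] K, ContinuousOn (F K') (Icc a b))
    (hlip : ∀ᶠ K' in 𝓝[s] K, ∀ x ∈ Icc a b, |F K' x - F K x| ≤ C * |K' - K|)
    (hF' : ∀ x ∈ Icc a b, HasDerivWithinAt (fun K' => F K' x) (F' x) s K) :
    HasDerivWithinAt (fun K' => ∫ x in a..b, F K' x) (∫ x in a..b, F' x) s K := by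
  have hFK := hF.self_of_nhdsWithin hK
  have hsub : 𝓝[s \ {K}] K ≤ 𝓝[s] K := nhdsWithin_mono _ sdiff_subset
  rw [hasDerivWithinAt_iff_tendsto_slope]
  have hquot : Tendsto (fun K' => ∫ x in a..b, (F K' x - F K x) / (K' - K)) (𝓝[s \ {K}] K)
      (𝓝 (∫ x in a..b, F' x)) := by
    refine tendsto_intervalIntegral_of_abs_le (C := C) hab ?_ ?_ ?_
    · exact (hF.filter_mono hsub).mono fun K' hK' => (hK'.sub hFK).div_const _
    · filter_upwards [hlip.filter_mono hsub, self_mem_nhdsWithin] with K' hK' hne x hx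
      rw [abs_div, div_le_iff₀ (abs_pos.2 (sub_ne_zero.2 hne.2))]
      exact hK' x hx
    · exact fun x hx => (hF' x hx).tendsto_sub_div_sub
  refine hquot.congr' ?_
  filter_upwards [hF.filter_mono hsub] with K' hK'
  rw [slope_def_field, ← integral_sub (hK'.intervalIntegrable_of_Icc hab)
    (hFK.intervalIntegrable_of_Icc hab), intervalIntegral.integral_div]

theorem strictConcaveOn_of_hasDerivWithinAt2_neg {D : Set ℝ} (hD : Convex ℝ D)
    {f f' f'' : ℝ → ℝ} (hf : ContinuousOn f D)
    (hf' : ∀ x ∈ interior D, HasDerivWithinAt f (f' x) (interior D) x)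
    (hf'' : ∀ x ∈ interior D, HasDerivWithinAt f' (f'' x) (interior D) x)
    (hf''₀ : ∀ x ∈ interior D, f'' x < 0) : StrictConcaveOn ℝ D f := by
  have hanti : StrictAntiOn f' (interior D) :=
    strictAntiOn_of_hasDerivWithinAt_neg hD.interior
      (fun x hx => (hf'' x hx).continuousWithinAt) (by rwa [interior_interior])
      (by rwa [interior_interior])
  exact StrictAntiOn.strictConcaveOn_of_deriv hD hf
    (hanti.congr (deriv_eqOn isOpen_interior hf').symm)

theorem abs_le_of_deriv2_eq_mul_add {u u' u'' p g : ℝ → ℝ} {a b L δ ε : ℝ} (hL : 1 ≤ L)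
    (hu : ∀ x ∈ Icc a b, HasDerivAt u (u' x) x) (hu' : ∀ x ∈ Icc a b, HasDerivAt u' (u'' x) x)
    (hode : ∀ x ∈ Icc a b, u'' x = p x * u x + g x)
    (hp : ∀ x ∈ Icc a b, |p x| ≤ L) (hg : ∀ x ∈ Icc a b, |g x| ≤ ε)
    (hδ : |u a| ≤ δ) (hδ' : |u' a| ≤ δ) :
    ∀ x ∈ Icc a b, |u x| ≤ (δ + ε) * exp (L * (b - a)) := by
  have hL0 : 0 < L := one_pos.trans_le hL
  have hgron := norm_le_gronwallBound_of_norm_deriv_right_le (f := fun t => (u t, u' t))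
    (f' := fun t => (u' t, u'' t)) (δ := δ) (K := L) (ε := ε)
    (fun x hx => ((hu x hx).continuousAt.prodMk (hu' x hx).continuousAt).continuousWithinAt)
    (fun x hx => ((hu x (Ico_subset_Icc_self hx)).prodMk
      (hu' x (Ico_subset_Icc_self hx))).hasDerivWithinAt)
    (by simpa [Prod.norm_def] using ⟨hδ, hδ'⟩)
    (fun x hx => by
      have hx := Ico_subset_Icc_self hx
      simp only [Prod.norm_def, Real.norm_eq_abs, hode x hx]
      refine max_le ?_ ?_
      · have hmax : 0 ≤ max |u x| |u' x| := (abs_nonneg _).trans (le_max_left _ _)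
        nlinarith [le_max_right |u x| |u' x|, abs_nonneg (g x), hg x hx]
      · calc |p x * u x + g x| ≤ |p x| * |u x| + ε := by
              rw [← abs_mul]; linarith [abs_add_le (p x * u x) (g x), hg x hx]
          _ ≤ L * max |u x| |u' x| + ε := by
              gcongr
              · exact hp x hx
              · exact le_max_left _ _)
  intro x hx
  have hε : 0 ≤ ε := (abs_nonneg _).trans (hg x hx)
  have hδ0 : 0 ≤ δ := (abs_nonneg _).trans hδ
  have hexp : exp (L * (x - a)) ≤ exp (L * (b - a)) := by
    gcongr; exact hx.2
  calc |u x| ≤ ‖(u x, u' x)‖ := by simp [Prod.norm_def]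
    _ ≤ δ * exp (L * (x - a)) + ε / L * (exp (L * (x - a)) - 1) := by
        simpa [gronwallBound_of_K_ne_0 hL0.ne'] using hgron x hx
    _ ≤ δ * exp (L * (b - a)) + ε * exp (L * (b - a)) := by
        gcongr ?_ + ?_
        · gcongr
        calc ε / L * (exp (L * (x - a)) - 1) ≤ ε * exp (L * (x - a)) := by
              rw [div_mul_eq_mul_div, div_le_iff₀ hL0]
              nlinarith [mul_nonneg (mul_nonneg hε (exp_pos (L * (x - a))).le) (sub_nonneg.2 hL)]
          _ ≤ ε * exp (L * (b - a)) := by gcongr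
    _ = (δ + ε) * exp (L * (b - a)) := by ring

-- also at `u = 0`, thanks to `w / 0 = 0`: this covers the left endpoint, where `y_K` vanishes
theorem sq_div_sq_mul_sub_div (u v ζ w : ℝ) (hv : v ≠ 0) :
    u ^ 2 / v ^ 2 * (ζ / v - w / u) = ζ / v ^ 3 * u ^ 2 - u * w / v ^ 2 := by
  rcases eq_or_ne u 0 with rfl | hu
  · simp
  · field_simp

structure IsFundamentalSolution (a b : ℝ) (V u u' u'' : ℝ → ℝ) : Prop where
  hasDerivAt : ∀ x ∈ Icc a b, HasDerivAt u (u' x) x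
  hasDerivAt_deriv : ∀ x ∈ Icc a b, HasDerivAt u' (u'' x) x
  deriv2_eq : ∀ x ∈ Icc a b, u'' x = V x * u x
  left_eq : u a = 0
  deriv_left_eq : u' a = 1

namespace IsFundamentalSolution

variable {a b : ℝ} {V u u' u'' : ℝ → ℝ}

theorem continuousOn (hu : IsFundamentalSolution a b V u u' u'') : ContinuousOn u (Icc a b) :=
  fun x hx => (hu.hasDerivAt x hx).continuousAt.continuousWithinAt

theorem abs_le {L : ℝ} (hu : IsFundamentalSolution a b V u u' u'') (hL : 1 ≤ L)
    (hV : ∀ x ∈ Icc a b, |V x| ≤ L) : ∀ x ∈ Icc a b, |u x| ≤ exp (L * (b - a)) := by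
  simpa using abs_le_of_deriv2_eq_mul_add (g := 0) (δ := 1) (ε := 0) hL hu.hasDerivAt
    hu.hasDerivAt_deriv (by simpa using hu.deriv2_eq) hV (by simp)
    (by simp [hu.left_eq]) (by simp [hu.deriv_left_eq])

theorem abs_sub_le {V₂ u₂ u₂' u₂'' : ℝ → ℝ} {L δ : ℝ} (hu : IsFundamentalSolution a b V u u' u'')
    (hu₂ : IsFundamentalSolution a b V₂ u₂ u₂' u₂'') (hL : 1 ≤ L)
    (hV : ∀ x ∈ Icc a b, |V x| ≤ L) (hV₂ : ∀ x ∈ Icc a b, |V₂ x| ≤ L)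
    (hδ : ∀ x ∈ Icc a b, |V₂ x - V x| ≤ δ) :
    ∀ x ∈ Icc a b, |u₂ x - u x| ≤ δ * exp (L * (b - a)) * exp (L * (b - a)) := by
  have hbound := hu.abs_le hL hV
  simpa using abs_le_of_deriv2_eq_mul_add (u := fun x => u₂ x - u x) (p := V₂)
    (g := fun x => (V₂ x - V x) * u x) (δ := 0) hL (fun x hx => (hu₂.hasDerivAt x hx).sub (hu.hasDerivAt x hx))
    (fun x hx => (hu₂.hasDerivAt_deriv x hx).sub (hu.hasDerivAt_deriv x hx))
    (fun x hx => by rw [hu₂.deriv2_eq x hx, hu.deriv2_eq x hx]; ring) hV₂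
    (fun x hx => by
      rw [abs_mul]
      exact mul_le_mul (hδ x hx) (hbound x hx) (abs_nonneg _) ((abs_nonneg _).trans (hδ x hx)))
    (by simp [hu.left_eq, hu₂.left_eq]) (by simp [hu.deriv_left_eq, hu₂.deriv_left_eq])

theorem wronskian {q u₂ u₂' u₂'' : ℝ → ℝ} {κ κ₂ x : ℝ}
    (hu : IsFundamentalSolution a b (fun t => κ + q t) u u' u'')
    (hu₂ : IsFundamentalSolution a b (fun t => κ₂ + q t) u₂ u₂' u₂'') (hx : x ∈ Icc a b) :
    u₂' x * u x - u₂ x * u' x = (κ₂ - κ) * ∫ t in a..x, u t * u₂ t := by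
  have hsub : Icc a x ⊆ Icc a b := Icc_subset_Icc le_rfl hx.2
  have hderiv : ∀ t ∈ uIcc a x, HasDerivAt (fun s => u₂' s * u s - u₂ s * u' s)
      ((κ₂ - κ) * (u t * u₂ t)) t := by
    intro t ht
    rw [uIcc_of_le hx.1] at ht
    have ht := hsub ht
    refine (((hu₂.hasDerivAt_deriv t ht).mul (hu.hasDerivAt t ht)).sub
      ((hu₂.hasDerivAt t ht).mul (hu.hasDerivAt_deriv t ht))).congr_deriv ?_
    rw [hu.deriv2_eq t ht, hu₂.deriv2_eq t ht]
    ring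
  have hint : IntervalIntegrable (fun t => (κ₂ - κ) * (u t * u₂ t)) volume a x :=
    (continuousOn_const.mul ((hu.continuousOn.mono hsub).mul
      (hu₂.continuousOn.mono hsub))).intervalIntegrable_of_Icc hx.1
  rw [← intervalIntegral.integral_const_mul, integral_eq_sub_of_hasDerivAt hderiv hint,
    hu.left_eq, hu₂.left_eq]
  ring

theorem div_sub_div_eq_mul_integral {q u₂ u₂' u₂'' : ℝ → ℝ} {κ κ₂ x₁ x₂ : ℝ}
    (hu : IsFundamentalSolution a b (fun t => κ + q t) u u' u'')
    (hu₂ : IsFundamentalSolution a b (fun t => κ₂ + q t) u₂ u₂' u₂'')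
    (hx₁ : a ≤ x₁) (hx₁₂ : x₁ ≤ x₂) (hx₂ : x₂ ≤ b) (hne : ∀ x ∈ Icc x₁ x₂, u x ≠ 0) :
    u₂ x₂ / u x₂ - u₂ x₁ / u x₁ =
      (κ₂ - κ) * ∫ t in x₁..x₂, (∫ s in a..t, u s * u₂ s) / u t ^ 2 := by
  have hsub : Icc x₁ x₂ ⊆ Icc a b := Icc_subset_Icc hx₁ hx₂
  have hprim : ContinuousOn (fun t => ∫ s in a..t, u s * u₂ s) (Icc a b) :=
    (hu.continuousOn.mul hu₂.continuousOn).continuousOn_primitive_Icc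
      (hx₁.trans (hx₁₂.trans hx₂))
  have hderiv : ∀ t ∈ uIcc x₁ x₂, HasDerivAt (fun s => u₂ s / u s)
      ((κ₂ - κ) * ((∫ s in a..t, u s * u₂ s) / u t ^ 2)) t := by
    intro t ht
    rw [uIcc_of_le hx₁₂] at ht
    refine ((hu₂.hasDerivAt t (hsub ht)).div (hu.hasDerivAt t (hsub ht)) (hne t ht)).congr_deriv ?_
    rw [hu.wronskian hu₂ (hsub ht), mul_div_assoc]
  have hint : IntervalIntegrable
      (fun t => (κ₂ - κ) * ((∫ s in a..t, u s * u₂ s) / u t ^ 2)) volume x₁ x₂ :=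
    (continuousOn_const.mul ((hprim.mono hsub).div ((hu.continuousOn.mono hsub).pow 2)
      fun t ht => pow_ne_zero 2 (hne t ht))).intervalIntegrable_of_Icc hx₁₂
  rw [← intervalIntegral.integral_const_mul, integral_eq_sub_of_hasDerivAt hderiv hint]

/-- Rayleigh's argument: with `φ = u / (U - c)`, the energy `E = (U - c)² φ φ'` has
`E' = (U - c)² φ'² + K u² ≥ 0`, `E(a) = 0` and `E'(a) = 1`, so `E > 0` on `(a, b]` and `u` has no
zero there. -/
theorem pos_of_rayleigh {U U' U'' : ℝ → ℝ} {c K : ℝ}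
    (hu : IsFundamentalSolution a b (fun x => K + U'' x / (U x - c)) u u' u'') (hK : 0 ≤ K)
    (hU : ∀ x ∈ Icc a b, HasDerivAt U (U' x) x) (hU' : ∀ x ∈ Icc a b, HasDerivAt U' (U'' x) x)
    (hc : ∀ x ∈ Icc a b, U x ≠ c) : ∀ x ∈ Ioc a b, 0 < u x := by
  have hUc : ∀ x ∈ Icc a b, U x - c ≠ 0 := fun x hx => sub_ne_zero.2 (hc x hx)
  set E : ℝ → ℝ := fun t => u t * u' t - u t ^ 2 * U' t / (U t - c)
  have hE : ∀ x ∈ Icc a b,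
      HasDerivAt E ((u' x - u x * U' x / (U x - c)) ^ 2 + K * u x ^ 2) x := by
    intro x hx
    refine (((hu.hasDerivAt x hx).mul (hu.hasDerivAt_deriv x hx)).sub
      ((((hu.hasDerivAt x hx).pow 2).mul (hU' x hx)).div ((hU x hx).sub_const c)
        (hUc x hx))).congr_deriv ?_
    simp only [Pi.pow_apply, Pi.mul_apply, hu.deriv2_eq x hx]
    field_simp [hUc x hx]
    ring
  have hEmono : MonotoneOn E (Icc a b) :=
    monotoneOn_of_deriv_nonneg (convex_Icc a b)
      (fun x hx => (hE x hx).continuousAt.continuousWithinAt)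
      (fun x hx => (hE x (interior_subset hx)).differentiableAt.differentiableWithinAt)
      (fun x hx => by rw [(hE x (interior_subset hx)).deriv]; positivity)
  have hne : ∀ x ∈ Ioc a b, u x ≠ 0 := by
    intro x hx hux
    have ha : a ∈ Icc a b := ⟨le_rfl, hx.1.le.trans hx.2⟩
    have hEa : ∀ᶠ t in 𝓝[>] a, 0 < E t :=
      eventually_pos_of_hasDerivAt (hE a ha) (by simp [E, hu.left_eq])
        (by simp [hu.left_eq, hu.deriv_left_eq])
    obtain ⟨t, hEt, ht⟩ := (hEa.and (Ioo_mem_nhdsGT hx.1)).exists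
    have hEx : E x = 0 := by simp [E, hux]
    linarith [hEmono ⟨ht.1.le, ht.2.le.trans hx.2⟩ (Ioc_subset_Icc_self hx) ht.2.le]
  intro x hx
  have hua : ∀ᶠ t in 𝓝[>] a, 0 < u t :=
    eventually_pos_of_hasDerivAt (hu.hasDerivAt a ⟨le_rfl, hx.1.le.trans hx.2⟩) hu.left_eq
      (by simp [hu.deriv_left_eq])
  obtain ⟨t, hut, ht⟩ := (hua.and (Ioo_mem_nhdsGT hx.1)).exists
  refine (hne x hx).lt_or_gt.resolve_left fun hux => ?_
  obtain ⟨s, hs, hus⟩ := intermediate_value_Icc' ht.2.le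
    (hu.continuousOn.mono (Icc_subset_Icc ht.1.le hx.2)) ⟨hux.le, hut.le⟩
  exact hne s ⟨ht.1.trans_le hs.1, hs.2.trans hx.2⟩ hus

end IsFundamentalSolution

theorem exists_eventually_abs_add_le {a b : ℝ} {q : ℝ → ℝ} (hq : ContinuousOn q (Icc a b))
    (K : ℝ) : ∃ L, 1 ≤ L ∧ ∀ᶠ K' in 𝓝[Ici 0] K, 0 ≤ K' ∧ ∀ x ∈ Icc a b, |K' + q x| ≤ L := by
  obtain ⟨Q, hQ⟩ := isCompact_Icc.exists_bound_of_continuousOn hq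
  refine ⟨max 1 (|K| + 1 + Q), le_max_left _ _, ?_⟩
  filter_upwards [self_mem_nhdsWithin, nhdsWithin_le_nhds (Metric.ball_mem_nhds K one_pos)]
    with K' hK' hball
  refine ⟨hK', fun x hx => ?_⟩
  have hK'K : |K'| ≤ |K| + 1 := by
    have := abs_sub_abs_le_abs_sub K' K
    rw [Metric.mem_ball, Real.dist_eq] at hball
    linarith
  calc |K' + q x| ≤ |K'| + |q x| := abs_add_le _ _
    _ ≤ |K| + 1 + Q := by linarith [hQ x hx, Real.norm_eq_abs (q x)]
    _ ≤ max 1 (|K| + 1 + Q) := le_max_right _ _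

def IsFundamentalFamily (a b : ℝ) (q : ℝ → ℝ) (y y' y'' : ℝ → ℝ → ℝ) : Prop :=
  ∀ K ∈ Ici (0 : ℝ), IsFundamentalSolution a b (fun x => K + q x) (y K) (y' K) (y'' K)

namespace IsFundamentalFamily

variable {a b : ℝ} {q : ℝ → ℝ} {y y' y'' : ℝ → ℝ → ℝ} {K : ℝ}

theorem exists_eventually_abs_le (hy : IsFundamentalFamily a b q y y' y'')
    (hq : ContinuousOn q (Icc a b)) (K : ℝ) :
    ∃ B, ∀ᶠ K' in 𝓝[Ici 0] K, ∀ x ∈ Icc a b, |y K' x| ≤ B := by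
  obtain ⟨L, hL, hev⟩ := exists_eventually_abs_add_le hq K
  exact ⟨_, hev.mono fun K' hK' => (hy K' hK'.1).abs_le hL hK'.2⟩

theorem exists_eventually_abs_sub_le (hy : IsFundamentalFamily a b q y y' y'')
    (hq : ContinuousOn q (Icc a b)) (hK : K ∈ Ici 0) :
    ∃ C, ∀ᶠ K' in 𝓝[Ici 0] K, ∀ x ∈ Icc a b, |y K' x - y K x| ≤ C * |K' - K| := by
  obtain ⟨L, hL, hev⟩ := exists_eventually_abs_add_le hq K
  have hLK := (hev.self_of_nhdsWithin hK).2
  refine ⟨exp (L * (b - a)) * exp (L * (b - a)), hev.mono fun K' hK' x hx => ?_⟩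
  rw [mul_comm, ← mul_assoc]
  exact (hy K hK).abs_sub_le (hy K' hK'.1) hL hLK hK'.2
    (fun t _ => by rw [add_sub_add_right_eq_sub]) x hx

theorem continuousWithinAt (hy : IsFundamentalFamily a b q y y' y'')
    (hq : ContinuousOn q (Icc a b)) (hK : K ∈ Ici 0) {x : ℝ} (hx : x ∈ Icc a b) :
    ContinuousWithinAt (fun K' => y K' x) (Ici 0) K := by
  obtain ⟨C, hC⟩ := hy.exists_eventually_abs_sub_le hq hK
  have hlim : Tendsto (fun K' => C * |K' - K|) (𝓝[Ici 0] K) (𝓝 0) := by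
    have hcont : Continuous fun K' => C * |K' - K| := by fun_prop
    simpa using (hcont.tendsto K).mono_left nhdsWithin_le_nhds
  rw [ContinuousWithinAt, tendsto_iff_norm_sub_tendsto_zero]
  exact squeeze_zero' (.of_forall fun _ => norm_nonneg _)
    (hC.mono fun K' hK' => hK' x hx) hlim

theorem tendsto_integral_mul (hy : IsFundamentalFamily a b q y y' y'')
    (hq : ContinuousOn q (Icc a b)) (hK : K ∈ Ici 0) {t : ℝ} (ht : t ∈ Icc a b) :
    Tendsto (fun K' => ∫ s in a..t, y K s * y K' s) (𝓝[Ici 0] K)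
      (𝓝 (∫ s in a..t, y K s ^ 2)) := by
  have hsub : Icc a t ⊆ Icc a b := Icc_subset_Icc le_rfl ht.2
  obtain ⟨B, hB⟩ := hy.exists_eventually_abs_le hq K
  have hBK := hB.self_of_nhdsWithin hK
  simp only [sq]
  refine tendsto_intervalIntegral_of_abs_le (C := B * B) ht.1 ?_ ?_
    fun s hs => tendsto_const_nhds.mul (hy.continuousWithinAt hq hK (hsub hs))
  · filter_upwards [self_mem_nhdsWithin] with K' hK'
    exact ((hy K hK).continuousOn.mul (hy K' hK').continuousOn).mono hsub
  · filter_upwards [hB] with K' hK' s hs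
    rw [abs_mul]
    exact mul_le_mul (hBK s (hsub hs)) (hK' s (hsub hs)) (abs_nonneg _)
      ((abs_nonneg _).trans (hBK s (hsub hs)))

theorem hasDerivWithinAt_deriv_div (hy : IsFundamentalFamily a b q y y' y'')
    (hq : ContinuousOn q (Icc a b)) (hab : a ≤ b) (hb : ∀ K ∈ Ici 0, y K b ≠ 0)
    (hK : K ∈ Ici 0) :
    HasDerivWithinAt (fun K => y' K b / y K b) ((∫ x in a..b, y K x ^ 2) / y K b ^ 2)
      (Ici 0) K := by
  have hbmem : b ∈ Icc a b := ⟨hab, le_rfl⟩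
  have hsub : 𝓝[Ici 0 \ {K}] K ≤ 𝓝[Ici 0] K := nhdsWithin_mono _ sdiff_subset
  rw [hasDerivWithinAt_iff_tendsto_slope, sq]
  refine (((hy.tendsto_integral_mul hq hK hbmem).div
    (tendsto_const_nhds.mul (hy.continuousWithinAt hq hK hbmem))
    (mul_ne_zero (hb K hK) (hb K hK))).mono_left hsub).congr' ?_
  filter_upwards [self_mem_nhdsWithin] with K' ⟨hK', hne⟩
  have hKK : K' - K ≠ 0 := sub_ne_zero.2 hne
  rw [slope_def_field, div_sub_div _ _ (hb K' hK') (hb K hK),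
    (hy K hK).wronskian (hy K' hK') hbmem, Pi.div_apply]
  field_simp

theorem exists_eventually_abs_slope_le (hy : IsFundamentalFamily a b q y y' y'')
    (hq : ContinuousOn q (Icc a b)) (hK : K ∈ Ici 0) :
    ∃ C, ∀ᶠ K' in 𝓝[Ici 0 \ {K}] K, ∀ x ∈ Icc a b, |(y K' x - y K x) / (K' - K)| ≤ C := by
  obtain ⟨C, hC⟩ := hy.exists_eventually_abs_sub_le hq hK
  refine ⟨C, ?_⟩
  filter_upwards [hC.filter_mono (nhdsWithin_mono _ sdiff_subset), self_mem_nhdsWithin]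
    with K' hK' hne x hx
  rw [abs_div, div_le_iff₀ (abs_pos.2 (sub_ne_zero.2 hne.2))]
  exact hK' x hx

theorem hasDerivWithinAt_integral_sq (hy : IsFundamentalFamily a b q y y' y'')
    (hq : ContinuousOn q (Icc a b)) (hab : a ≤ b) (hK : K ∈ Ici 0) {z : ℝ → ℝ}
    (hz : ∀ x ∈ Icc a b, HasDerivWithinAt (fun K' => y K' x) (z x) (Ici 0) K) :
    HasDerivWithinAt (fun K' => ∫ x in a..b, y K' x ^ 2) (∫ x in a..b, 2 * y K x * z x)
      (Ici 0) K := by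
  obtain ⟨B, hB⟩ := hy.exists_eventually_abs_le hq K
  obtain ⟨C, hC⟩ := hy.exists_eventually_abs_sub_le hq hK
  have hBK := hB.self_of_nhdsWithin hK
  refine hasDerivWithinAt_intervalIntegral_of_lipschitz (C := C * (B + B)) hab hK
    (eventually_mem_nhdsWithin.mono fun K' hK' => (hy K' hK').continuousOn.pow 2) ?_
    fun x hx => by simpa using (hz x hx).fun_pow 2
  filter_upwards [hB, hC] with K' hBK' hCK' x hx
  calc |y K' x ^ 2 - y K x ^ 2| = |y K' x - y K x| * |y K' x + y K x| := by
        rw [← abs_mul]; ring_nf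
    _ ≤ C * |K' - K| * (B + B) :=
        mul_le_mul (hCK' x hx) ((abs_add_le _ _).trans (add_le_add (hBK' x hx) (hBK x hx)))
          (abs_nonneg _) ((abs_nonneg _).trans (hCK' x hx))
    _ = C * (B + B) * |K' - K| := by ring

theorem intervalIntegrable_mul (hy : IsFundamentalFamily a b q y y' y'')
    (hq : ContinuousOn q (Icc a b)) (hab : a ≤ b) (hK : K ∈ Ici 0) {z : ℝ → ℝ}
    (hz : ∀ x ∈ Icc a b, HasDerivWithinAt (fun K' => y K' x) (z x) (Ici 0) K) :
    IntervalIntegrable (fun x => y K x * z x) volume a b := by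
  obtain ⟨B, hB⟩ := hy.exists_eventually_abs_le hq K
  obtain ⟨C, hC⟩ := hy.exists_eventually_abs_slope_le hq hK
  have hBK := hB.self_of_nhdsWithin hK
  have := nhdsWithin_Ici_diff_singleton_neBot hK
  refine intervalIntegrable_of_tendsto_of_abs_le (l := 𝓝[Ici 0 \ {K}] K)
    (F := fun K' x => y K x * ((y K' x - y K x) / (K' - K))) (C := B * C) hab ?_ ?_ ?_
  · filter_upwards [self_mem_nhdsWithin] with K' hK'
    exact (hy K hK).continuousOn.mul
      (((hy K' hK'.1).continuousOn.sub (hy K hK).continuousOn).div_const _)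
  · filter_upwards [hC] with K' hK' x hx
    rw [abs_mul]
    exact mul_le_mul (hBK x hx) (hK' x hx) (abs_nonneg _) ((abs_nonneg _).trans (hBK x hx))
  · exact fun x hx => tendsto_const_nhds.mul (hz x hx).tendsto_sub_div_sub

theorem tendsto_integral_integral_mul_div_sq (hy : IsFundamentalFamily a b q y y' y'')
    (hq : ContinuousOn q (Icc a b)) (hK : K ∈ Ici 0) {x₁ x₂ : ℝ} (hx₁ : a ≤ x₁)
    (hx₁₂ : x₁ ≤ x₂) (hx₂ : x₂ ≤ b) (hne : ∀ t ∈ Icc x₁ x₂, y K t ≠ 0) :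
    Tendsto (fun K' => ∫ t in x₁..x₂, (∫ s in a..t, y K s * y K' s) / y K t ^ 2) (𝓝[Ici 0] K)
      (𝓝 (∫ t in x₁..x₂, (∫ s in a..t, y K s ^ 2) / y K t ^ 2)) := by
  have hab : a ≤ b := hx₁.trans (hx₁₂.trans hx₂)
  have hsub : Icc x₁ x₂ ⊆ Icc a b := Icc_subset_Icc hx₁ hx₂
  obtain ⟨B, hB⟩ := hy.exists_eventually_abs_le hq K
  have hBK := hB.self_of_nhdsWithin hK
  obtain ⟨M, hM⟩ := isCompact_Icc.exists_bound_of_continuousOn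
    (((hy K hK).continuousOn.mono hsub).pow 2 |>.inv₀ fun t ht => pow_ne_zero 2 (hne t ht))
  refine tendsto_intervalIntegral_of_abs_le (C := B * B * (b - a) * M) hx₁₂ ?_ ?_
    fun t ht => (hy.tendsto_integral_mul hq hK (hsub ht)).div_const _
  · filter_upwards [self_mem_nhdsWithin] with K' hK'
    exact ((((hy K hK).continuousOn.mul (hy K' hK').continuousOn).continuousOn_primitive_Icc
      hab).mono hsub).div ((hy K hK).continuousOn.pow 2 |>.mono hsub)
        fun t ht => pow_ne_zero 2 (hne t ht)
  · filter_upwards [hB] with K' hK' t ht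
    have hta := hsub ht
    have hP : |∫ s in a..t, y K s * y K' s| ≤ B * B * (b - a) := by
      have hB0 : 0 ≤ B := (abs_nonneg _).trans (hBK a ⟨le_rfl, hab⟩)
      calc |∫ s in a..t, y K s * y K' s| ≤ B * B * |t - a| := by
            rw [← Real.norm_eq_abs]
            refine intervalIntegral.norm_integral_le_of_norm_le_const fun s hs => ?_
            rw [uIoc_of_le hta.1] at hs
            have hs' : s ∈ Icc a b := ⟨hs.1.le, hs.2.trans hta.2⟩
            rw [Real.norm_eq_abs, abs_mul]
            exact mul_le_mul (hBK s hs') (hK' s hs') (abs_nonneg _)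
              ((abs_nonneg _).trans (hBK s hs'))
        _ ≤ B * B * (b - a) := by
            rw [abs_of_nonneg (sub_nonneg.2 hta.1)]
            gcongr
            exact hta.2
    rw [abs_div, div_eq_mul_inv, ← abs_inv]
    exact mul_le_mul hP (by simpa using hM t ht) (abs_nonneg _) ((abs_nonneg _).trans hP)

theorem strictMonoOn_div (hy : IsFundamentalFamily a b q y y' y'')
    (hq : ContinuousOn q (Icc a b)) (hpos : ∀ K ∈ Ici 0, ∀ x ∈ Ioc a b, 0 < y K x)
    (hK : K ∈ Ici 0) {z : ℝ → ℝ}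
    (hz : ∀ x ∈ Icc a b, HasDerivWithinAt (fun K' => y K' x) (z x) (Ici 0) K) :
    StrictMonoOn (fun x => z x / y K x) (Ioc a b) := by
  intro x₁ hx₁ x₂ hx₂ hlt
  have hne : ∀ t ∈ Icc x₁ x₂, y K t ≠ 0 := fun t ht =>
    (hpos K hK t ⟨hx₁.1.trans_le ht.1, ht.2.trans hx₂.2⟩).ne'
  have := nhdsWithin_Ici_diff_singleton_neBot hK
  -- the finite-difference version of `∂ₓ (z / y) = (∫ y²) / y²`
  have hquot : ∀ᶠ K' in 𝓝[Ici 0 \ {K}] K,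
      (y K' x₂ - y K x₂) / (K' - K) / y K x₂ - (y K' x₁ - y K x₁) / (K' - K) / y K x₁ =
        ∫ t in x₁..x₂, (∫ s in a..t, y K s * y K' s) / y K t ^ 2 := by
    filter_upwards [self_mem_nhdsWithin] with K' ⟨hK', hKK⟩
    have h := (hy K hK).div_sub_div_eq_mul_integral (hy K' hK') hx₁.1.le hlt.le hx₂.2 hne
    have h₁ := hne x₁ ⟨le_rfl, hlt.le⟩
    have h₂ := hne x₂ ⟨hlt.le, le_rfl⟩
    calc (y K' x₂ - y K x₂) / (K' - K) / y K x₂ - (y K' x₁ - y K x₁) / (K' - K) / y K x₁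
        = (y K' x₂ / y K x₂ - y K' x₁ / y K x₁) / (K' - K) := by field_simp; ring
      _ = _ := by rw [h, mul_div_cancel_left₀ _ (sub_ne_zero.2 hKK)]
  have heq := tendsto_nhds_unique
    ((((hz x₂ (Ioc_subset_Icc_self hx₂)).tendsto_sub_div_sub.div_const _).sub
      ((hz x₁ (Ioc_subset_Icc_self hx₁)).tendsto_sub_div_sub.div_const _)).congr' hquot)
    ((hy.tendsto_integral_integral_mul_div_sq hq hK hx₁.1.le hlt.le hx₂.2 hne).mono_left
      (nhdsWithin_mono _ sdiff_subset))
  have hI := integral_primitive_sq_div_sq_pos (hy K hK).continuousOn (hpos K hK) hx₁.1 hlt hx₂.2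
  simp only
  linarith

theorem hasDerivWithinAt_integral_sq_div (hy : IsFundamentalFamily a b q y y' y'')
    (hq : ContinuousOn q (Icc a b)) (hab : a ≤ b) (hK : K ∈ Ici 0) (hb : y K b ≠ 0)
    {z : ℝ → ℝ} (hz : ∀ x ∈ Icc a b, HasDerivWithinAt (fun K' => y K' x) (z x) (Ici 0) K) :
    HasDerivWithinAt (fun K => (∫ x in a..b, y K x ^ 2) / y K b ^ 2)
      (-2 * ∫ x in a..b, y K x ^ 2 / y K b ^ 2 * (z b / y K b - z x / y K x)) (Ici 0) K := by
  refine ((hy.hasDerivWithinAt_integral_sq hq hab hK hz).div ((hz b ⟨hab, le_rfl⟩).fun_pow 2)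
    (pow_ne_zero 2 hb)).congr_deriv ?_
  have hsq : IntervalIntegrable (fun x => y K x ^ 2) volume a b :=
    ((hy K hK).continuousOn.pow 2).intervalIntegrable_of_Icc hab
  simp_rw [sq_div_sq_mul_sub_div _ _ _ _ hb]
  rw [integral_sub (hsq.const_mul _) ((hy.intervalIntegrable_mul hq hab hK hz).div_const _),
    intervalIntegral.integral_const_mul, intervalIntegral.integral_div]
  simp only [mul_assoc, intervalIntegral.integral_const_mul]
  field_simp
  ring

theorem integral_sq_div_sq_mul_sub_div_pos (hy : IsFundamentalFamily a b q y y' y'')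
    (hq : ContinuousOn q (Icc a b)) (hpos : ∀ K ∈ Ici 0, ∀ x ∈ Ioc a b, 0 < y K x)
    (hab : a < b) (hK : K ∈ Ici 0) {z : ℝ → ℝ}
    (hz : ∀ x ∈ Icc a b, HasDerivWithinAt (fun K' => y K' x) (z x) (Ici 0) K) :
    0 < ∫ x in a..b, y K x ^ 2 / y K b ^ 2 * (z b / y K b - z x / y K x) := by
  have hb := hpos K hK b ⟨hab, le_rfl⟩
  refine intervalIntegral_pos_of_pos_on ?_ (fun x hx => mul_pos ?_ ?_) hab
  · simp_rw [sq_div_sq_mul_sub_div _ _ _ _ hb.ne']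
    exact ((((hy K hK).continuousOn.pow 2).intervalIntegrable_of_Icc hab.le).const_mul _).sub
      ((hy.intervalIntegrable_mul hq hab.le hK hz).div_const _)
  · exact div_pos (pow_pos (hpos K hK x ⟨hx.1, hx.2.le⟩) 2) (pow_pos hb 2)
  · exact sub_pos.2 (hy.strictMonoOn_div hq hpos hK hz ⟨hx.1, hx.2.le⟩ ⟨hab, le_rfl⟩ hx.2)

end IsFundamentalFamily

/-- Strict concavity in `K = k²` of `G(K) = Y⁻(c, √K)` for the lower fundamental
solution, with the explicit formula for the second derivative. -/
theorem concavity_Y_minus_in_K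
    (hm : ℝ) (hhm : 0 < hm)
    (Um Um' Um'' : ℝ → ℝ)
    (hUm : ∀ x ∈ Icc (-hm) (0:ℝ), HasDerivAt Um (Um' x) x)
    (hUm' : ∀ x ∈ Icc (-hm) (0:ℝ), HasDerivAt Um' (Um'' x) x)
    (hUmc : ContinuousOn Um'' (Icc (-hm) (0:ℝ)))
    (c : ℝ) (hc : ∀ x ∈ Icc (-hm) (0:ℝ), Um x ≠ c)
    (y y' y'' : ℝ → ℝ → ℝ)
    (hsol : ∀ K ∈ Ici (0:ℝ),
      (∀ x ∈ Icc (-hm) (0:ℝ),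
        HasDerivAt (y K) (y' K x) x ∧ HasDerivAt (y' K) (y'' K x) x ∧
        -y'' K x + (K + Um'' x / (Um x - c)) * y K x = 0) ∧
      y K (-hm) = 0 ∧ y' K (-hm) = 1)
    (z : ℝ → ℝ → ℝ)
    (hz : ∀ K ∈ Ici (0:ℝ), ∀ x ∈ Icc (-hm) (0:ℝ),
      HasDerivWithinAt (fun K' => y K' x) (z K x) (Ici 0) K) :
    ∃ G' : ℝ → ℝ,
      (∀ K ∈ Ici (0:ℝ),
        HasDerivWithinAt (fun K' => y' K' 0 / y K' 0) (G' K) (Ici 0) K ∧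
        HasDerivWithinAt G'
          (-2 * ∫ x in (-hm)..0,
            y K x ^ 2 / y K 0 ^ 2 * (z K 0 / y K 0 - z K x / y K x))
          (Ici 0) K ∧
        -2 * (∫ x in (-hm)..0,
            y K x ^ 2 / y K 0 ^ 2 * (z K 0 / y K 0 - z K x / y K x)) < 0) ∧
      StrictConcaveOn ℝ (Ici 0) (fun K => y' K 0 / y K 0) := by
  have hab : -hm < 0 := neg_neg_iff_pos.2 hhm
  have hy : IsFundamentalFamily (-hm) 0 (fun x => Um'' x / (Um x - c)) y y' y'' := fun K hK =>
    ⟨fun x hx => ((hsol K hK).1 x hx).1, fun x hx => ((hsol K hK).1 x hx).2.1,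
      fun x hx => by linarith [((hsol K hK).1 x hx).2.2], (hsol K hK).2.1, (hsol K hK).2.2⟩
  have hq : ContinuousOn (fun x => Um'' x / (Um x - c)) (Icc (-hm) 0) :=
    hUmc.div (fun x hx => ((hUm x hx).continuousAt.sub continuousAt_const).continuousWithinAt)
      fun x hx => sub_ne_zero.2 (hc x hx)
  have hpos : ∀ K ∈ Ici (0:ℝ), ∀ x ∈ Ioc (-hm) 0, 0 < y K x :=
    fun K hK => (hy K hK).pos_of_rayleigh hK hUm hUm' hc
  have hb : ∀ K ∈ Ici (0:ℝ), y K 0 ≠ 0 := fun K hK => (hpos K hK 0 ⟨hab, le_rfl⟩).ne'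
  have hG := fun K (hK : K ∈ Ici (0:ℝ)) => hy.hasDerivWithinAt_deriv_div hq hab.le hb hK
  have hG' := fun K (hK : K ∈ Ici (0:ℝ)) =>
    hy.hasDerivWithinAt_integral_sq_div hq hab.le hK (hb K hK) (hz K hK)
  have hG'' : ∀ K ∈ Ici (0:ℝ), -2 * (∫ x in (-hm)..0,
      y K x ^ 2 / y K 0 ^ 2 * (z K 0 / y K 0 - z K x / y K x)) < 0 := fun K hK => by
    linarith [hy.integral_sq_div_sq_mul_sub_div_pos hq hpos hab hK (hz K hK)]
  refine ⟨_, fun K hK => ⟨hG K hK, hG' K hK, hG'' K hK⟩, ?_⟩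
  exact strictConcaveOn_of_hasDerivWithinAt2_neg (convex_Ici 0)
    (fun K hK => (hG K hK).continuousWithinAt)
    (fun K hK => (hG K (interior_subset hK)).mono interior_subset)
    (fun K hK => (hG' K (interior_subset hK)).mono interior_subset)
    (fun K hK => hG'' K (interior_subset hK))
end

section
/- Let h₋ > 0, U⁻ ∈ C²([−h₋, 0]; ℝ), k ∈ ℝ, and c ∈ ℝ \ U⁻([−h₋, 0]). Let y⁻(c, k, ·) be the unique solution on [−h₋, 0] of the Rayleigh equation −y'' + (k² + (U⁻)''/(U⁻ − c)) y = 0 with y(−h₋) = 0, y'(−h₋) = 1. Then y⁻(c, k, x) > 0 for all x ∈ (−h₋, 0]. -/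
/-!
With `ψ = U⁻ - c`, the Rayleigh equation reads `y'' = (k² + ψ''/ψ) y`, and replacing `(U⁻, c)` by
`(-U⁻, -c)` leaves it unchanged, so we may assume `ψ > 0` (it has constant sign since `c` is not a
value of `U⁻`). The Wronskian `W = ψ y' - ψ' y` then satisfies `W' = k² ψ y` and `(y/ψ)' = W/ψ²`,
with `W(-h₋) = ψ(-h₋) > 0`. As long as `W > 0`, `y/ψ` increases from `0`, so `y ≥ 0` and `W` keeps
increasing; hence `W > 0` throughout, and `y/ψ` is strictly increasing, i.e. `y > 0` after `-h₋`.
-/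

open Set

lemma IsPreconnected.forall_pos_or_forall_neg {α : Type*} [TopologicalSpace α] {s : Set α}
    {f : α → ℝ} (hs : IsPreconnected s) (hf : ContinuousOn f s) (hne : ∀ x ∈ s, f x ≠ 0) :
    (∀ x ∈ s, 0 < f x) ∨ (∀ x ∈ s, f x < 0) := by
  by_contra! h
  obtain ⟨⟨x, hx, hfx⟩, y, hy, hfy⟩ := h
  obtain ⟨z, hz, hfz⟩ := hs.intermediate_value hx hy hf ⟨hfx, hfy⟩
  exact hne z hz hfz

lemma ContinuousOn.pos_on_Icc_of_pos_on_Ico {f : ℝ → ℝ} {a b : ℝ}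
    (hf : ContinuousOn f (Icc a b))
    (step : ∀ t ∈ Icc a b, (∀ x ∈ Ico a t, 0 < f x) → 0 < f t) :
    ∀ x ∈ Icc a b, 0 < f x := by
  by_contra! h
  have hZ : IsClosed (Icc a b ∩ f ⁻¹' Iic 0) :=
    hf.preimage_isClosed_of_isClosed isClosed_Icc isClosed_Iic
  have hbdd : BddBelow (Icc a b ∩ f ⁻¹' Iic 0) := ⟨a, fun x hx => hx.1.1⟩
  have ht := hZ.csInf_mem h hbdd
  refine (step _ ht.1 fun x hx => ?_).not_ge ht.2
  by_contra! hfx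
  exact hx.2.not_ge (csInf_le hbdd ⟨⟨hx.1, hx.2.le.trans ht.1.2⟩, hfx⟩)

lemma monotoneOn_Icc_of_hasDerivAt_nonneg {f f' : ℝ → ℝ} {a b : ℝ}
    (hf : ∀ x ∈ Icc a b, HasDerivAt f (f' x) x) (hf' : ∀ x ∈ Ioo a b, 0 ≤ f' x) :
    MonotoneOn f (Icc a b) :=
  monotoneOn_of_hasDerivWithinAt_nonneg (convex_Icc a b)
    (fun x hx => (hf x hx).continuousAt.continuousWithinAt)
    (fun x hx => (hf x (interior_subset hx)).hasDerivWithinAt)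
    (by rwa [interior_Icc])

lemma strictMonoOn_Icc_of_hasDerivAt_pos {f f' : ℝ → ℝ} {a b : ℝ}
    (hf : ∀ x ∈ Icc a b, HasDerivAt f (f' x) x) (hf' : ∀ x ∈ Ioo a b, 0 < f' x) :
    StrictMonoOn f (Icc a b) :=
  strictMonoOn_of_hasDerivWithinAt_pos (convex_Icc a b)
    (fun x hx => (hf x hx).continuousAt.continuousWithinAt)
    (fun x hx => (hf x (interior_subset hx)).hasDerivWithinAt)
    (by rwa [interior_Icc])

def wronskian (f f' g g' : ℝ → ℝ) (x : ℝ) : ℝ := f x * g' x - f' x * g x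

lemma hasDerivAt_wronskian {f f' g g' : ℝ → ℝ} {f'' g'' x : ℝ}
    (hf : HasDerivAt f (f' x) x) (hf' : HasDerivAt f' f'' x)
    (hg : HasDerivAt g (g' x) x) (hg' : HasDerivAt g' g'' x) :
    HasDerivAt (wronskian f f' g g') (f x * g'' - f'' * g x) x :=
  ((hf.mul hg').sub (hf'.mul hg)).congr_deriv (by ring)

lemma hasDerivAt_div_eq_wronskian {f f' g g' : ℝ → ℝ} {x : ℝ}
    (hf : HasDerivAt f (f' x) x) (hg : HasDerivAt g (g' x) x) (hfx : f x ≠ 0) :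
    HasDerivAt (fun t => g t / f t) (wronskian f f' g g' x / f x ^ 2) x :=
  (hg.div hf hfx).congr_deriv (by unfold wronskian; ring)

section Rayleigh

variable {a b : ℝ} {q ψ ψ' ψ'' y y' y'' : ℝ → ℝ}

lemma wronskian_pos_of_rayleigh
    (hψ : ∀ x ∈ Icc a b, HasDerivAt ψ (ψ' x) x) (hψ' : ∀ x ∈ Icc a b, HasDerivAt ψ' (ψ'' x) x)
    (hy : ∀ x ∈ Icc a b, HasDerivAt y (y' x) x) (hy' : ∀ x ∈ Icc a b, HasDerivAt y' (y'' x) x)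
    (hψ_pos : ∀ x ∈ Icc a b, 0 < ψ x) (hq : ∀ x ∈ Icc a b, 0 ≤ q x)
    (hode : ∀ x ∈ Icc a b, -y'' x + (q x + ψ'' x / ψ x) * y x = 0)
    (hya : y a = 0) (hy'a : 0 < y' a) :
    ∀ x ∈ Icc a b, 0 < wronskian ψ ψ' y y' x := by
  have hW : ∀ x ∈ Icc a b, HasDerivAt (wronskian ψ ψ' y y') (q x * ψ x * y x) x := by
    intro x hx
    refine (hasDerivAt_wronskian (hψ x hx) (hψ' x hx) (hy x hx) (hy' x hx)).congr_deriv ?_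
    rw [show y'' x = (q x + ψ'' x / ψ x) * y x by linarith [hode x hx]]
    field_simp [(hψ_pos x hx).ne']
    ring
  refine ContinuousOn.pos_on_Icc_of_pos_on_Ico
    (fun x hx => (hW x hx).continuousAt.continuousWithinAt) fun t ht hW_pos => ?_
  have hsub : Icc a t ⊆ Icc a b := Icc_subset_Icc_right ht.2
  have hquot_mono : MonotoneOn (fun x => y x / ψ x) (Icc a t) :=
    monotoneOn_Icc_of_hasDerivAt_nonneg
      (fun x hx => hasDerivAt_div_eq_wronskian (hψ x (hsub hx)) (hy x (hsub hx))
        (hψ_pos x (hsub hx)).ne')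
      (fun x hx => div_nonneg (hW_pos x (Ioo_subset_Ico_self hx)).le (sq_nonneg _))
  have hy_nonneg : ∀ x ∈ Icc a t, 0 ≤ y x := by
    intro x hx
    have h : y a / ψ a ≤ y x / ψ x := hquot_mono (left_mem_Icc.mpr ht.1) hx hx.1
    rw [hya, zero_div, le_div_iff₀ (hψ_pos x (hsub hx)), zero_mul] at h
    exact h
  have hW_mono : MonotoneOn (wronskian ψ ψ' y y') (Icc a t) :=
    monotoneOn_Icc_of_hasDerivAt_nonneg (fun x hx => hW x (hsub hx)) fun x hx =>
      have hx' := Ioo_subset_Icc_self hx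
      mul_nonneg (mul_nonneg (hq x (hsub hx')) (hψ_pos x (hsub hx')).le) (hy_nonneg x hx')
  calc 0 < wronskian ψ ψ' y y' a := by
        simpa [wronskian, hya] using mul_pos (hψ_pos a (hsub (left_mem_Icc.mpr ht.1))) hy'a
    _ ≤ wronskian ψ ψ' y y' t :=
        hW_mono (left_mem_Icc.mpr ht.1) (right_mem_Icc.mpr ht.1) ht.1

lemma pos_of_wronskian_pos
    (hψ : ∀ x ∈ Icc a b, HasDerivAt ψ (ψ' x) x) (hy : ∀ x ∈ Icc a b, HasDerivAt y (y' x) x)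
    (hψ_pos : ∀ x ∈ Icc a b, 0 < ψ x) (hW : ∀ x ∈ Icc a b, 0 < wronskian ψ ψ' y y' x)
    (hya : y a = 0) :
    ∀ x ∈ Ioc a b, 0 < y x := by
  intro x hx
  have hquot_mono : StrictMonoOn (fun x => y x / ψ x) (Icc a b) :=
    strictMonoOn_Icc_of_hasDerivAt_pos
      (fun x hx => hasDerivAt_div_eq_wronskian (hψ x hx) (hy x hx) (hψ_pos x hx).ne')
      (fun x hx => have hx' := Ioo_subset_Icc_self hx
        div_pos (hW x hx') (pow_pos (hψ_pos x hx') 2))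
  have h : y a / ψ a < y x / ψ x :=
    hquot_mono (left_mem_Icc.mpr (hx.1.le.trans hx.2)) (Ioc_subset_Icc_self hx) hx.1
  rwa [hya, zero_div, div_pos_iff_of_pos_right (hψ_pos x (Ioc_subset_Icc_self hx))] at h

theorem rayleigh_pos
    (hψ : ∀ x ∈ Icc a b, HasDerivAt ψ (ψ' x) x) (hψ' : ∀ x ∈ Icc a b, HasDerivAt ψ' (ψ'' x) x)
    (hy : ∀ x ∈ Icc a b, HasDerivAt y (y' x) x) (hy' : ∀ x ∈ Icc a b, HasDerivAt y' (y'' x) x)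
    (hψ_pos : ∀ x ∈ Icc a b, 0 < ψ x) (hq : ∀ x ∈ Icc a b, 0 ≤ q x)
    (hode : ∀ x ∈ Icc a b, -y'' x + (q x + ψ'' x / ψ x) * y x = 0)
    (hya : y a = 0) (hy'a : 0 < y' a) :
    ∀ x ∈ Ioc a b, 0 < y x :=
  pos_of_wronskian_pos hψ hy hψ_pos
    (wronskian_pos_of_rayleigh hψ hψ' hy hy' hψ_pos hq hode hya hy'a) hya

end Rayleigh

theorem y_minus_pos_general
    (hm : ℝ)
    (Um Um' Um'' : ℝ → ℝ)
    (hUm : ∀ x ∈ Icc (-hm) (0:ℝ), HasDerivAt Um (Um' x) x)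
    (hUm' : ∀ x ∈ Icc (-hm) (0:ℝ), HasDerivAt Um' (Um'' x) x)
    (k : ℝ) (c : ℝ) (hc : ∀ x ∈ Icc (-hm) (0:ℝ), Um x ≠ c)
    (y y' y'' : ℝ → ℝ)
    (hy : ∀ x ∈ Icc (-hm) (0:ℝ),
      HasDerivAt y (y' x) x ∧ HasDerivAt y' (y'' x) x ∧
      -y'' x + (k ^ 2 + Um'' x / (Um x - c)) * y x = 0)
    (hb0 : y (-hm) = 0) (hb1 : y' (-hm) = 1) :
    ∀ x ∈ Ioc (-hm) (0:ℝ), 0 < y x := by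
  have hq : ∀ x ∈ Icc (-hm) (0:ℝ), 0 ≤ k ^ 2 := fun _ _ => sq_nonneg k
  have hy'a : 0 < y' (-hm) := hb1 ▸ one_pos
  rcases isPreconnected_Icc.forall_pos_or_forall_neg (f := fun x => Um x - c)
      (fun x hx => ((hUm x hx).sub_const c).continuousAt.continuousWithinAt)
      (fun x hx => sub_ne_zero.mpr (hc x hx)) with hpos | hneg
  · exact rayleigh_pos (fun x hx => (hUm x hx).sub_const c) hUm' (fun x hx => (hy x hx).1)
      (fun x hx => (hy x hx).2.1) hpos hq (fun x hx => (hy x hx).2.2) hb0 hy'a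
  · refine rayleigh_pos (ψ := fun x => c - Um x) (ψ'' := fun x => -Um'' x)
      (fun x hx => (hUm x hx).const_sub c) (fun x hx => (hUm' x hx).neg) (fun x hx => (hy x hx).1)
      (fun x hx => (hy x hx).2.1) (fun x hx => sub_pos.mpr (sub_neg.mp (hneg x hx))) hq
      (fun x hx => ?_) hb0 hy'a
    rw [← neg_sub, neg_div_neg_eq]
    exact (hy x hx).2.2

/-- Positivity of the lower fundamental solution `y⁻(c, k, ·)` on `(-h₋, 0]`
for real `c` outside the range of `U⁻`. -/
theorem y_minus_pos
    (hm : ℝ) (hhm : 0 < hm)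
    (Um Um' Um'' : ℝ → ℝ)
    (hUm : ∀ x ∈ Icc (-hm) (0:ℝ), HasDerivAt Um (Um' x) x)
    (hUm' : ∀ x ∈ Icc (-hm) (0:ℝ), HasDerivAt Um' (Um'' x) x)
    (hUmc : ContinuousOn Um'' (Icc (-hm) (0:ℝ)))
    (k : ℝ) (c : ℝ) (hc : ∀ x ∈ Icc (-hm) (0:ℝ), Um x ≠ c)
    (y y' y'' : ℝ → ℝ)
    (hy : ∀ x ∈ Icc (-hm) (0:ℝ),
      HasDerivAt y (y' x) x ∧ HasDerivAt y' (y'' x) x ∧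
      -y'' x + (k ^ 2 + Um'' x / (Um x - c)) * y x = 0)
    (hb0 : y (-hm) = 0) (hb1 : y' (-hm) = 1) :
    ∀ x ∈ Ioc (-hm) (0:ℝ), 0 < y x :=
  y_minus_pos_general hm Um Um' Um'' hUm hUm' k c hc y y' y'' hy hb0 hb1
end

section
/- Let h₊ > 0, U⁺ ∈ C²([0, h₊]; ℝ), k ∈ ℝ, and c ∈ ℝ \ U⁺([0, h₊]). Let y⁺(c, k, ·) be the unique solution on [0, h₊] of the Rayleigh equation −y'' + (k² + (U⁺)''/(U⁺ − c)) y = 0 with y(h₊) = 0, y'(h₊) = 1. Then y⁺(c, k, x) < 0 for all x ∈ [0, h₊). -/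
open Set

/-! `U - c` solves the Rayleigh equation with `k = 0`, so `w = y / (U - c)` satisfies
`((U - c)² w')' = k² (U - c)² w`. Hence `F = (U - c)² w w'` has `F' = (U - c)² (w'² + k² w²) ≥ 0`,
and `F(h₊) = 0` gives `F ≤ 0`, i.e. `w²` is nonincreasing on `[0, h₊]`. As `y'(h₊) = 1`, `y < 0`
just left of `h₊`, so `w² > 0` on all of `[0, h₊)`: `y` has no zero there, and by connectedness
keeps the sign it has near `h₊`. -/

theorem HasDerivAt.exists_mem_Ioo_neg {f : ℝ → ℝ} {f' a b : ℝ} (hf : HasDerivAt f f' b)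
    (hf' : 0 < f') (hfb : f b = 0) (hab : a < b) : ∃ t ∈ Ioo a b, f t < 0 := by
  have hsign := eventually_nhdsWithin_sign_eq_of_deriv_pos (hf.deriv ▸ hf') hfb
  obtain ⟨t, hft, ht⟩ :=
    ((hsign.filter_mono nhdsWithin_le_nhds).and (Ioo_mem_nhdsLT hab)).exists
  refine ⟨t, ht, ?_⟩
  rw [← sign_eq_neg_one_iff, hft, sign_eq_neg_one_iff, sub_neg]
  exact ht.2

theorem monotoneOn_of_hasDerivAt_nonneg {f f' : ℝ → ℝ} {s : Set ℝ} (hs : Convex ℝ s)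
    (hf : ∀ x ∈ s, HasDerivAt f (f' x) x) (hf' : ∀ x ∈ s, 0 ≤ f' x) : MonotoneOn f s :=
  monotoneOn_of_hasDerivWithinAt_nonneg hs
    (fun x hx => (hf x hx).continuousAt.continuousWithinAt)
    (fun x hx => (hf x (interior_subset hx)).hasDerivWithinAt)
    (fun x hx => hf' x (interior_subset hx))

theorem antitoneOn_of_hasDerivAt_nonpos {f f' : ℝ → ℝ} {s : Set ℝ} (hs : Convex ℝ s)
    (hf : ∀ x ∈ s, HasDerivAt f (f' x) x) (hf' : ∀ x ∈ s, f' x ≤ 0) : AntitoneOn f s :=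
  antitoneOn_of_hasDerivWithinAt_nonpos hs
    (fun x hx => (hf x hx).continuousAt.continuousWithinAt)
    (fun x hx => (hf x (interior_subset hx)).hasDerivWithinAt)
    (fun x hx => hf' x (interior_subset hx))

section Rayleigh

variable {U U' U'' y y' y'' : ℝ → ℝ} {k c x : ℝ}

/-- The quantity `(U - c)² w w'`, `w = y / (U - c)`, written in terms of `y`. -/
noncomputable def rayleighFlux (U U' y y' : ℝ → ℝ) (c x : ℝ) : ℝ :=
  y x * y' x - y x ^ 2 * U' x / (U x - c)

theorem hasDerivAt_rayleighFlux (hU : HasDerivAt U (U' x) x) (hU' : HasDerivAt U' (U'' x) x)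
    (hy : HasDerivAt y (y' x) x) (hy' : HasDerivAt y' (y'' x) x)
    (hray : -y'' x + (k ^ 2 + U'' x / (U x - c)) * y x = 0) (hUc : U x ≠ c) :
    HasDerivAt (rayleighFlux U U' y y' c)
      (k ^ 2 * y x ^ 2 + (y' x - y x * U' x / (U x - c)) ^ 2) x := by
  have hd : U x - c ≠ 0 := sub_ne_zero.mpr hUc
  have hy'' : y'' x = (k ^ 2 + U'' x / (U x - c)) * y x := by linarith
  refine ((hy.mul hy').sub (((hy.pow 2).mul hU').div (hU.sub_const c) hd)).congr_deriv ?_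
  simp only [Pi.pow_apply, Pi.mul_apply, hy'']
  field_simp
  ring

theorem hasDerivAt_sq_div_sub (hU : HasDerivAt U (U' x) x) (hy : HasDerivAt y (y' x) x)
    (hUc : U x ≠ c) :
    HasDerivAt (fun x => (y x / (U x - c)) ^ 2)
      (2 * rayleighFlux U U' y y' c x / (U x - c) ^ 2) x := by
  have hd : U x - c ≠ 0 := sub_ne_zero.mpr hUc
  refine ((hy.div (hU.sub_const c) hd).pow 2).congr_deriv ?_
  simp only [rayleighFlux, Pi.div_apply, Nat.cast_ofNat, Nat.add_one_sub_one, pow_one]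
  field_simp

theorem antitoneOn_sq_div_sub {a b : ℝ} (hab : a ≤ b)
    (hU : ∀ x ∈ Icc a b, HasDerivAt U (U' x) x) (hU' : ∀ x ∈ Icc a b, HasDerivAt U' (U'' x) x)
    (hUc : ∀ x ∈ Icc a b, U x ≠ c)
    (hy : ∀ x ∈ Icc a b, HasDerivAt y (y' x) x ∧ HasDerivAt y' (y'' x) x ∧
      -y'' x + (k ^ 2 + U'' x / (U x - c)) * y x = 0)
    (hyb : y b = 0) :
    AntitoneOn (fun x => (y x / (U x - c)) ^ 2) (Icc a b) := by
  have hflux : ∀ x ∈ Icc a b, rayleighFlux U U' y y' c x ≤ 0 := fun x hx =>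
    calc rayleighFlux U U' y y' c x
        ≤ rayleighFlux U U' y y' c b :=
          monotoneOn_of_hasDerivAt_nonneg (convex_Icc a b)
            (fun x hx => hasDerivAt_rayleighFlux (hU x hx) (hU' x hx) (hy x hx).1 (hy x hx).2.1
              (hy x hx).2.2 (hUc x hx))
            (fun _ _ => by positivity) hx (right_mem_Icc.mpr hab) hx.2
      _ = 0 := by simp [rayleighFlux, hyb]
  exact antitoneOn_of_hasDerivAt_nonpos (convex_Icc a b)
    (fun x hx => hasDerivAt_sq_div_sub (hU x hx) (hy x hx).1 (hUc x hx))
    (fun x hx => div_nonpos_of_nonpos_of_nonneg (by linarith [hflux x hx]) (sq_nonneg _))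

end Rayleigh

theorem y_plus_neg_general
    (hp : ℝ) (hhp : 0 < hp)
    (Up Up' Up'' : ℝ → ℝ)
    (hUp : ∀ x ∈ Icc (0:ℝ) hp, HasDerivAt Up (Up' x) x)
    (hUp' : ∀ x ∈ Icc (0:ℝ) hp, HasDerivAt Up' (Up'' x) x)
    (k : ℝ) (c : ℝ) (hc : ∀ x ∈ Icc (0:ℝ) hp, Up x ≠ c)
    (y y' y'' : ℝ → ℝ)
    (hy : ∀ x ∈ Icc (0:ℝ) hp,
      HasDerivAt y (y' x) x ∧ HasDerivAt y' (y'' x) x ∧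
      -y'' x + (k ^ 2 + Up'' x / (Up x - c)) * y x = 0)
    (hb0 : y hp = 0) (hb1 : y' hp = 1) :
    ∀ x ∈ Ico (0:ℝ) hp, y x < 0 := by
  have hanti := antitoneOn_sq_div_sub hhp.le hUp hUp' hc hy hb0
  have hdy : HasDerivAt y 1 hp := hb1 ▸ (hy hp (right_mem_Icc.mpr hhp.le)).1
  have hne : ∀ x ∈ Ico 0 hp, y x ≠ 0 := by
    intro x hx hyx
    obtain ⟨t, ht, hyt⟩ := hdy.exists_mem_Ioo_neg one_pos hb0 hx.2
    have htmem : t ∈ Icc 0 hp := ⟨hx.1.trans ht.1.le, ht.2.le⟩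
    have hpos : 0 < (y t / (Up t - c)) ^ 2 :=
      sq_pos_of_ne_zero (div_ne_zero hyt.ne (sub_ne_zero.mpr (hc t htmem)))
    exact hpos.not_ge ((hanti (Ico_subset_Icc_self hx) htmem ht.1.le).trans_eq (by simp [hyx]))
  obtain ⟨t, ht, hyt⟩ := hdy.exists_mem_Ioo_neg one_pos hb0 hhp
  exact fun x hx => isPreconnected_Ico.gt_of_ne
    (fun z hz => (hy z (Ico_subset_Icc_self hz)).1.continuousAt.continuousWithinAt) hne
    ⟨t, Ioo_subset_Ico_self ht, hyt⟩ hx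

/-- Negativity of the upper fundamental solution `y⁺(c, k, ·)` on `[0, h₊)`
for real `c` outside the range of `U⁺`. -/
theorem y_plus_neg
    (hp : ℝ) (hhp : 0 < hp)
    (Up Up' Up'' : ℝ → ℝ)
    (hUp : ∀ x ∈ Icc (0:ℝ) hp, HasDerivAt Up (Up' x) x)
    (hUp' : ∀ x ∈ Icc (0:ℝ) hp, HasDerivAt Up' (Up'' x) x)
    (hUpc : ContinuousOn Up'' (Icc (0:ℝ) hp))
    (k : ℝ) (c : ℝ) (hc : ∀ x ∈ Icc (0:ℝ) hp, Up x ≠ c)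
    (y y' y'' : ℝ → ℝ)
    (hy : ∀ x ∈ Icc (0:ℝ) hp,
      HasDerivAt y (y' x) x ∧ HasDerivAt y' (y'' x) x ∧
      -y'' x + (k ^ 2 + Up'' x / (Up x - c)) * y x = 0)
    (hb0 : y hp = 0) (hb1 : y' hp = 1) :
    ∀ x ∈ Ico (0:ℝ) hp, y x < 0 :=
  y_plus_neg_general hp hhp Up Up' Up'' hUp hUp' k c hc y y' y'' hy hb0 hb1
end

section
/- Let h₋ > 0, U⁻ ∈ C²([−h₋, 0]; ℝ), and c ∈ ℝ \ U⁻([−h₋, 0]). Let y⁻(c, 0, ·) be the unique solution on [−h₋, 0] of −y'' + ((U⁻)''/(U⁻ − c)) y = 0 with y(−h₋) = 0, y'(−h₋) = 1. Then y⁻(c, 0, 0) ≠ 0 and Y⁻(c, 0) := (y⁻)'(c, 0, 0)/y⁻(c, 0, 0) = (U⁻)'(0)/(U⁻(0) − c) + 1 / ( (U⁻(0) − c)² ∫_{−h₋}^{0} (U⁻(x) − c)^{−2} dx ). -/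
open Set MeasureTheory intervalIntegral

/-!
Since `U⁻ - c` itself solves `-v'' + ((U⁻)''/(U⁻ - c)) v = 0`, the Wronskian
`y' (U⁻ - c) - y (U⁻)'` is constant, equal to its value `U⁻(-h₋) - c` at `-h₋`.
Hence `(y / (U⁻ - c))' = (U⁻(-h₋) - c) / (U⁻ - c)²`, and integrating from `-h₋` gives
`y(0) = (U⁻(-h₋) - c) (U⁻(0) - c) ∫ (U⁻ - c)⁻²`, which is nonzero. Evaluating the
Wronskian at `0` then yields the formula for `y'(0) / y(0)`.
-/

section SecondOrder

variable {a b : ℝ} {q f f' f'' g g' g'' : ℝ → ℝ}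

theorem hasDerivAt_wronskian_eq_zero {x : ℝ}
    (hf : HasDerivAt f (f' x) x) (hf' : HasDerivAt f' (f'' x) x) (hfq : f'' x = q x * f x)
    (hg : HasDerivAt g (g' x) x) (hg' : HasDerivAt g' (g'' x) x) (hgq : g'' x = q x * g x) :
    HasDerivAt (fun t => f' t * g t - f t * g' t) 0 x := by
  have h := (hf'.mul hg).sub (hf.mul hg')
  rwa [hfq, hgq, show q x * f x * g x + f' x * g' x - (f' x * g' x + f x * (q x * g x)) = 0 by
    ring] at h

theorem wronskian_eq_of_hasDerivAt
    (hf : ∀ x ∈ Icc a b, HasDerivAt f (f' x) x) (hf' : ∀ x ∈ Icc a b, HasDerivAt f' (f'' x) x)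
    (hfq : ∀ x ∈ Icc a b, f'' x = q x * f x)
    (hg : ∀ x ∈ Icc a b, HasDerivAt g (g' x) x) (hg' : ∀ x ∈ Icc a b, HasDerivAt g' (g'' x) x)
    (hgq : ∀ x ∈ Icc a b, g'' x = q x * g x) :
    ∀ x ∈ Icc a b, f' x * g x - f x * g' x = f' a * g a - f a * g' a := by
  have hW : ∀ x ∈ Icc a b, HasDerivAt (fun t => f' t * g t - f t * g' t) 0 x := fun x hx =>
    hasDerivAt_wronskian_eq_zero (hf x hx) (hf' x hx) (hfq x hx) (hg x hx) (hg' x hx) (hgq x hx)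
  exact constant_of_has_deriv_right_zero
    (fun x hx => (hW x hx).continuousAt.continuousWithinAt)
    (fun x hx => (hW x (Ico_subset_Icc_self hx)).hasDerivWithinAt)

end SecondOrder

section InvSq

variable {a b : ℝ} {v v' : ℝ → ℝ}

theorem intervalIntegrable_inv_sq (hab : a ≤ b) (hv : ContinuousOn v (Icc a b))
    (hv0 : ∀ x ∈ Icc a b, v x ≠ 0) :
    IntervalIntegrable (fun x => (v x ^ 2)⁻¹) volume a b :=
  ContinuousOn.intervalIntegrable <| by
    rw [uIcc_of_le hab]
    exact (hv.pow 2).inv₀ fun x hx => pow_ne_zero 2 (hv0 x hx)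

theorem integral_inv_sq_pos (hab : a < b) (hv : ContinuousOn v (Icc a b))
    (hv0 : ∀ x ∈ Icc a b, v x ≠ 0) :
    0 < ∫ x in a..b, (v x ^ 2)⁻¹ :=
  intervalIntegral_pos_of_pos_on (intervalIntegrable_inv_sq hab.le hv hv0)
    (fun x hx => by have := hv0 x (Ioo_subset_Icc_self hx); positivity) hab

theorem div_sub_div_eq_mul_integral_inv_sq {y y' : ℝ → ℝ} {w : ℝ} (hab : a ≤ b)
    (hy : ∀ x ∈ Icc a b, HasDerivAt y (y' x) x) (hv : ∀ x ∈ Icc a b, HasDerivAt v (v' x) x)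
    (hv0 : ∀ x ∈ Icc a b, v x ≠ 0) (hW : ∀ x ∈ Icc a b, y' x * v x - y x * v' x = w) :
    y b / v b - y a / v a = w * ∫ x in a..b, (v x ^ 2)⁻¹ := by
  have hint := intervalIntegrable_inv_sq hab
    (fun x hx => (hv x hx).continuousAt.continuousWithinAt) hv0
  rw [← intervalIntegral.integral_const_mul]
  refine (integral_eq_sub_of_hasDerivAt (f := fun t => y t / v t) (fun x hx => ?_) (hint.const_mul w)).symm
  rw [uIcc_of_le hab] at hx
  have h := (hy x hx).div (hv x hx) (hv0 x hx)
  rwa [hW x hx, div_eq_mul_inv] at h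

end InvSq

theorem Y_minus_k_zero_formula_general
    (hm : ℝ) (hhm : 0 < hm)
    (Um Um' Um'' : ℝ → ℝ)
    (hUm : ∀ x ∈ Icc (-hm) (0:ℝ), HasDerivAt Um (Um' x) x)
    (hUm' : ∀ x ∈ Icc (-hm) (0:ℝ), HasDerivAt Um' (Um'' x) x)
    (c : ℝ) (hc : ∀ x ∈ Icc (-hm) (0:ℝ), Um x ≠ c)
    (y y' y'' : ℝ → ℝ)
    (hy : ∀ x ∈ Icc (-hm) (0:ℝ),
      HasDerivAt y (y' x) x ∧ HasDerivAt y' (y'' x) x ∧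
      -y'' x + (Um'' x / (Um x - c)) * y x = 0)
    (hb0 : y (-hm) = 0) (hb1 : y' (-hm) = 1) :
    y 0 ≠ 0 ∧
    y' 0 / y 0 = Um' 0 / (Um 0 - c)
      + 1 / ((Um 0 - c) ^ 2 * ∫ x in (-hm)..0, ((Um x - c) ^ 2)⁻¹) := by
  have hne : ∀ x ∈ Icc (-hm) (0:ℝ), Um x - c ≠ 0 := fun x hx => sub_ne_zero.mpr (hc x hx)
  have hV : ∀ x ∈ Icc (-hm) (0:ℝ), HasDerivAt (fun t => Um t - c) (Um' x) x :=
    fun x hx => (hUm x hx).sub_const c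
  have hW : ∀ x ∈ Icc (-hm) (0:ℝ), y' x * (Um x - c) - y x * Um' x = Um (-hm) - c := by
    intro x hx
    rw [wronskian_eq_of_hasDerivAt (q := fun x => Um'' x / (Um x - c))
      (fun x hx => (hy x hx).1) (fun x hx => (hy x hx).2.1)
      (fun x hx => by linarith [(hy x hx).2.2]) hV hUm'
      (fun x hx => (div_mul_cancel₀ _ (hne x hx)).symm) x hx, hb0, hb1]
    ring
  have hmem0 : (0:ℝ) ∈ Icc (-hm) 0 := ⟨neg_nonpos.mpr hhm.le, le_rfl⟩
  have hI := integral_inv_sq_pos (neg_lt_zero.mpr hhm)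
    (fun x hx => (hV x hx).continuousAt.continuousWithinAt) hne
  have hy0 := div_sub_div_eq_mul_integral_inv_sq (neg_nonpos.mpr hhm.le)
    (fun x hx => (hy x hx).1) hV hne hW
  have hV0 := hne 0 hmem0
  have hVm := hne (-hm) ⟨le_rfl, neg_nonpos.mpr hhm.le⟩
  rw [hb0, zero_div, sub_zero, div_eq_iff hV0] at hy0
  have hy0ne : y 0 ≠ 0 := by rw [hy0]; positivity
  refine ⟨hy0ne, ?_⟩
  have hW0 := hW 0 hmem0
  generalize ∫ x in (-hm)..0, ((Um x - c) ^ 2)⁻¹ = I at hI hy0 ⊢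
  rw [hy0] at hW0 ⊢
  rw [div_add_div _ _ hV0 (by positivity), div_eq_div_iff (by positivity) (by positivity)]
  linear_combination (Um 0 - c) ^ 2 * I * hW0

/-- Explicit formula for `Y⁻(c, 0)` at zero wave number for real `c` off the range
of `U⁻`. -/
theorem Y_minus_k_zero_formula
    (hm : ℝ) (hhm : 0 < hm)
    (Um Um' Um'' : ℝ → ℝ)
    (hUm : ∀ x ∈ Icc (-hm) (0:ℝ), HasDerivAt Um (Um' x) x)
    (hUm' : ∀ x ∈ Icc (-hm) (0:ℝ), HasDerivAt Um' (Um'' x) x)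
    (hUmc : ContinuousOn Um'' (Icc (-hm) (0:ℝ)))
    (c : ℝ) (hc : ∀ x ∈ Icc (-hm) (0:ℝ), Um x ≠ c)
    (y y' y'' : ℝ → ℝ)
    (hy : ∀ x ∈ Icc (-hm) (0:ℝ),
      HasDerivAt y (y' x) x ∧ HasDerivAt y' (y'' x) x ∧
      -y'' x + (Um'' x / (Um x - c)) * y x = 0)
    (hb0 : y (-hm) = 0) (hb1 : y' (-hm) = 1) :
    y 0 ≠ 0 ∧
    y' 0 / y 0 = Um' 0 / (Um 0 - c)
      + 1 / ((Um 0 - c) ^ 2 * ∫ x in (-hm)..0, ((Um x - c) ^ 2)⁻¹) :=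
  Y_minus_k_zero_formula_general hm hhm Um Um' Um'' hUm hUm' c hc y y' y'' hy hb0 hb1
end
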